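/- arXiv:1107.3094 — 2 statements merged into one kernel-verified Lean document; each statement's English description precedes it below -/
import Mathlib

section
/- Let g ≥ 1, let V = (ℤ/2ℤ)^{2g} with the standard symplectic pairing ⟨u, v⟩ = uᵀ J v, and fix a nonzero vector η ∈ V. If μ₁, μ₂ ∈ V are both nonzero, both different from η, and satisfy ⟨μ₁, η⟩ = ⟨μ₂, η⟩, then there exists a matrix S in the symplectic group Sp(2g, ℤ/2ℤ) with Sη = η and Sμ₁ = μ₂. Consequently the stabilizer G_η = {γ ∈ Sp(2g, ℤ/2ℤ) : γη = η} acts on the set of nonzero vectors of V with exactly three orbits: {η}, {μ ∉ {0, η} : ⟨μ, η⟩ = 0}, and {μ : ⟨μ, η⟩ = 1}. -/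
/-! Transvections `x ↦ x + ⟨x, w⟩ w` are symplectic. When `⟨μ₁, μ₂⟩ = 1`, the one along
`w = μ₁ + μ₂` sends `μ₁` to `μ₂`, and it fixes `η` because `⟨μ₁, η⟩ = ⟨μ₂, η⟩`. When
`⟨μ₁, μ₂⟩ = 0` one passes through some `ν` with `⟨ν, μ₁⟩ = ⟨ν, μ₂⟩ = 1` and `⟨ν, η⟩ = ⟨μ₁, η⟩`;
nondegeneracy of the pairing provides it when `η ∉ span {μ₁, μ₂}`, and the only other case,
`η = μ₁ + μ₂`, forces both sides of the last condition to vanish. Conversely, a symplectic map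
fixing `η` preserves `⟨·, η⟩` and, being injective, the condition `μ = η`. -/

open Matrix

/-- The standard symplectic form `J = [[0, I], [-I, 0]]` on `(ℤ/2ℤ)^{2g}`. -/
def sympJ (g : ℕ) : Matrix (Fin g ⊕ Fin g) (Fin g ⊕ Fin g) (ZMod 2) :=
  Matrix.fromBlocks 0 1 (-1) 0

/-- The standard symplectic pairing `⟨u, v⟩ = uᵀ J v` on `(ℤ/2ℤ)^{2g}`. -/
def sympPair {g : ℕ} (u v : Fin g ⊕ Fin g → ZMod 2) : ZMod 2 :=
  dotProduct u ((sympJ g).mulVec v)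

lemma ZMod.two_eq_zero_or_one (x : ZMod 2) : x = 0 ∨ x = 1 := by
  revert x; decide

lemma ZMod.two_eq_one_of_ne_zero {x : ZMod 2} (hx : x ≠ 0) : x = 1 :=
  (x.two_eq_zero_or_one).resolve_left hx

lemma ZMod.two_add_one_eq_of_ne {x y : ZMod 2} (h : x ≠ y) : x + 1 = y := by
  revert x y; decide

lemma ZModModule.add_self_eq_zero {M : Type*} [AddCommGroup M] [Module (ZMod 2) M] (x : M) :
    x + x = 0 := by
  rw [← two_nsmul]; exact ZModModule.char_nsmul_eq_zero 2 x

lemma mem_span_pair_zmod_two {M : Type*} [AddCommGroup M] [Module (ZMod 2) M] {x a b : M} :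
    x ∈ Submodule.span (ZMod 2) {a, b} ↔ x = 0 ∨ x = a ∨ x = b ∨ x = a + b := by
  rw [Submodule.mem_span_pair]
  constructor
  · rintro ⟨c, d, rfl⟩
    rcases c.two_eq_zero_or_one with rfl | rfl <;> rcases d.two_eq_zero_or_one with rfl | rfl <;>
      simp
  · rintro (rfl | rfl | rfl | rfl)
    exacts [⟨0, 0, by simp⟩, ⟨1, 0, by simp⟩, ⟨0, 1, by simp⟩, ⟨1, 1, by simp⟩]

lemma Matrix.neg_eq_self_zmod_two {m n : Type*} (A : Matrix m n (ZMod 2)) : -A = A := by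
  ext; exact ZMod.neg_eq_self_mod_two _

section
variable {g : ℕ}
local notation "V" => Fin g ⊕ Fin g → ZMod 2
local notation "Mat" => Matrix (Fin g ⊕ Fin g) (Fin g ⊕ Fin g) (ZMod 2)

lemma sympJ_transpose : (sympJ g)ᵀ = sympJ g := by
  simp [sympJ, fromBlocks_transpose, neg_eq_self_zmod_two]

lemma sympJ_mul_self : sympJ g * sympJ g = 1 := by
  simp [sympJ, fromBlocks_multiply, neg_eq_self_zmod_two]

lemma sympPair_eq_dotProduct (u v : V) : sympPair u v = sympJ g *ᵥ u ⬝ᵥ v := by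
  rw [sympPair, dotProduct_mulVec, ← mulVec_transpose, sympJ_transpose]

lemma sympPair_comm (u v : V) : sympPair u v = sympPair v u := by
  rw [sympPair_eq_dotProduct, dotProduct_comm, sympPair]

lemma sympPair_self (v : V) : sympPair v v = 0 := by
  simp [sympPair, sympJ, mulVec, dotProduct, Fintype.sum_sum_type, fromBlocks, one_apply, mul_comm,
    neg_eq_self_zmod_two, CharTwo.add_self_eq_zero]

@[simp] lemma sympPair_add_left (u v w : V) :
    sympPair (u + v) w = sympPair u w + sympPair v w :=
  add_dotProduct ..

@[simp] lemma sympPair_add_right (u v w : V) :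
    sympPair u (v + w) = sympPair u v + sympPair u w := by
  simp [sympPair, mulVec_add]

@[simp] lemma sympPair_smul_left (c : ZMod 2) (u v : V) :
    sympPair (c • u) v = c * sympPair u v :=
  smul_dotProduct ..

@[simp] lemma sympPair_smul_right (c : ZMod 2) (u v : V) :
    sympPair u (c • v) = c * sympPair u v := by
  simp [sympPair, mulVec_smul]

lemma sympPair_mulVec_mulVec (S : Mat) (x y : V) :
    sympPair (S *ᵥ x) (S *ᵥ y) = x ⬝ᵥ (Sᵀ * sympJ g * S) *ᵥ y := by
  rw [sympPair, ← mulVec_mulVec, ← mulVec_mulVec, dotProduct_mulVec x, vecMul_transpose]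

lemma exists_sympPair_eq (f : Module.Dual (ZMod 2) V) : ∃ w : V, ∀ v, sympPair w v = f v := by
  refine ⟨sympJ g *ᵥ fun i => f fun j => if i = j then 1 else 0, fun v => ?_⟩
  rw [sympPair_eq_dotProduct, mulVec_mulVec, sympJ_mul_self, one_mulVec, dotProduct_comm,
    LinearMap.pi_apply_eq_sum_univ f v]
  rfl

lemma exists_sympPair_eq_one_of_notMem {p : Submodule (ZMod 2) V} {x : V} (hx : x ∉ p) :
    ∃ w : V, sympPair w x = 1 ∧ ∀ y ∈ p, sympPair w y = 0 := by
  obtain ⟨f, hfx, hfp⟩ := p.exists_dual_map_eq_bot_of_notMem hx inferInstance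
  obtain ⟨w, hw⟩ := exists_sympPair_eq f
  refine ⟨w, by rw [hw]; exact ZMod.two_eq_one_of_ne_zero hfx, fun y hy => ?_⟩
  rw [hw, ← Submodule.mem_bot (ZMod 2), ← hfp]
  exact Submodule.mem_map_of_mem hy

lemma exists_sympPair_eq_one {v : V} (hv : v ≠ 0) : ∃ w : V, sympPair w v = 1 := by
  obtain ⟨w, hw, -⟩ := exists_sympPair_eq_one_of_notMem (p := ⊥) (by simpa using hv)
  exact ⟨w, hw⟩

lemma eq_zero_of_forall_sympPair_eq_zero {v : V} (hv : ∀ w, sympPair w v = 0) : v = 0 := by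
  by_contra h
  obtain ⟨w, hw⟩ := exists_sympPair_eq_one h
  exact zero_ne_one ((hv w).symm.trans hw)

lemma exists_sympPair_eq_one_eq_one {v₁ v₂ : V} (h₁ : v₁ ≠ 0) (h₂ : v₂ ≠ 0) :
    ∃ u : V, sympPair u v₁ = 1 ∧ sympPair u v₂ = 1 := by
  obtain ⟨p, hp⟩ := exists_sympPair_eq_one h₁
  obtain ⟨r, hr⟩ := exists_sympPair_eq_one h₂
  rcases (sympPair p v₂).two_eq_zero_or_one with hp₂ | hp₂
  · rcases (sympPair r v₁).two_eq_zero_or_one with hr₁ | hr₁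
    · exact ⟨p + r, by simp [hp, hr₁], by simp [hp₂, hr]⟩
    · exact ⟨r, hr₁, hr⟩
  · exact ⟨p, hp, hp₂⟩

lemma exists_sympPair_eq_one_eq_one_eq_of_notMem_span {η μ₁ μ₂ : V} (h₁ : μ₁ ≠ 0)
    (h₂ : μ₂ ≠ 0) (hη : η ∉ Submodule.span (ZMod 2) {μ₁, μ₂}) (a : ZMod 2) :
    ∃ ν : V, sympPair ν μ₁ = 1 ∧ sympPair ν μ₂ = 1 ∧ sympPair ν η = a := by
  obtain ⟨u, hu₁, hu₂⟩ := exists_sympPair_eq_one_eq_one h₁ h₂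
  obtain ⟨w, hwη, hw⟩ := exists_sympPair_eq_one_of_notMem hη
  have hw₁ := hw μ₁ (Submodule.subset_span (by simp))
  have hw₂ := hw μ₂ (Submodule.subset_span (by simp))
  rcases eq_or_ne (sympPair u η) a with hu | hu
  · exact ⟨u, hu₁, hu₂, hu⟩
  · refine ⟨u + w, by simp [hu₁, hw₁], by simp [hu₂, hw₂], ?_⟩
    simpa [hwη] using ZMod.two_add_one_eq_of_ne hu

lemma exists_sympPair_eq_one_eq_one_eq_of_sympPair_eq_zero {η μ₁ μ₂ : V} (hη : η ≠ 0)
    (h₁ : μ₁ ≠ 0) (h₂ : μ₂ ≠ 0) (h₁η : μ₁ ≠ η) (h₂η : μ₂ ≠ η) (h₀ : sympPair μ₁ μ₂ = 0) :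
    ∃ ν : V, sympPair ν μ₁ = 1 ∧ sympPair ν μ₂ = 1 ∧ sympPair ν η = sympPair μ₁ η := by
  by_cases hspan : η ∈ Submodule.span (ZMod 2) {μ₁, μ₂}
  · obtain rfl | rfl | rfl | rfl := mem_span_pair_zmod_two.mp hspan
    · exact absurd rfl hη
    · exact absurd rfl h₁η
    · exact absurd rfl h₂η
    · obtain ⟨u, hu₁, hu₂⟩ := exists_sympPair_eq_one_eq_one h₁ h₂
      exact ⟨u, hu₁, hu₂, by simp [hu₁, hu₂, h₀, sympPair_self, ZModModule.add_self_eq_zero]⟩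
  · exact exists_sympPair_eq_one_eq_one_eq_of_notMem_span h₁ h₂ hspan _

lemma symplectic_iff_sympPair_mulVec (S : Mat) :
    Sᵀ * sympJ g * S = sympJ g ↔ ∀ x y, sympPair (S *ᵥ x) (S *ᵥ y) = sympPair x y := by
  simp_rw [sympPair_mulVec_mulVec, sympPair, ← toLinearMap₂'_apply']
  exact ⟨fun h x y => by rw [h], fun h => (toLinearMap₂' (ZMod 2)).injective (LinearMap.ext₂ h)⟩

def sympTransvection (w : V) : Mat := 1 + vecMulVec w (sympJ g *ᵥ w)

lemma sympTransvection_mulVec (w x : V) :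
    sympTransvection w *ᵥ x = x + sympPair x w • w := by
  rw [sympTransvection, add_mulVec, one_mulVec, vecMulVec_mulVec, op_smul_eq_smul, sympPair_comm,
    sympPair_eq_dotProduct]

lemma sympTransvection_symplectic (w : V) :
    (sympTransvection w)ᵀ * sympJ g * sympTransvection w = sympJ g := by
  rw [symplectic_iff_sympPair_mulVec]
  intro x y
  simp only [sympTransvection_mulVec, sympPair_add_left, sympPair_add_right, sympPair_smul_left,
    sympPair_smul_right, sympPair_self]
  rw [sympPair_comm w y, mul_zero, add_zero, mul_comm (sympPair y w), add_assoc,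
    CharTwo.add_self_eq_zero, add_zero]

lemma mulVec_injective_of_symplectic {S : Mat} (hS : Sᵀ * sympJ g * S = sympJ g) :
    Function.Injective (S *ᵥ ·) := by
  intro x y hxy
  rw [← sub_eq_zero]
  refine eq_zero_of_forall_sympPair_eq_zero fun w => ?_
  rw [← (symplectic_iff_sympPair_mulVec S).mp hS, mulVec_sub, sub_eq_zero.mpr hxy, sympPair,
    mulVec_zero, dotProduct_zero]

lemma ne_of_sympPair_eq_one {μ η : V} (h : sympPair μ η = 1) : μ ≠ η := by
  rintro rfl
  simp [sympPair_self] at h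

def StabilizerRelated (η μ₁ μ₂ : V) : Prop :=
  ∃ S : Mat, Sᵀ * sympJ g * S = sympJ g ∧ S *ᵥ η = η ∧ S *ᵥ μ₁ = μ₂

namespace StabilizerRelated

variable {η μ₁ μ₂ μ₃ : Fin g ⊕ Fin g → ZMod 2}

lemma refl (η μ : V) : StabilizerRelated η μ μ :=
  ⟨1, by simp, one_mulVec η, one_mulVec μ⟩

lemma trans (h₁₂ : StabilizerRelated η μ₁ μ₂) (h₂₃ : StabilizerRelated η μ₂ μ₃) :
    StabilizerRelated η μ₁ μ₃ := by
  obtain ⟨S, hS, hSη, hSμ⟩ := h₁₂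
  obtain ⟨T, hT, hTη, hTμ⟩ := h₂₃
  refine ⟨T * S, ?_, by rw [← mulVec_mulVec, hSη, hTη], by rw [← mulVec_mulVec, hSμ, hTμ]⟩
  have hassoc : (T * S)ᵀ * sympJ _ * (T * S) = Sᵀ * (Tᵀ * sympJ _ * T) * S := by
    simp only [transpose_mul, Matrix.mul_assoc]
  rw [hassoc, hT, hS]

lemma sympPair_eq (h : StabilizerRelated η μ₁ μ₂) : sympPair μ₂ η = sympPair μ₁ η := by
  obtain ⟨S, hS, hSη, rfl⟩ := h
  conv_lhs => rw [← hSη]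
  exact (symplectic_iff_sympPair_mulVec S).mp hS μ₁ η

lemma eq_iff (h : StabilizerRelated η μ₁ μ₂) : μ₂ = η ↔ μ₁ = η := by
  obtain ⟨S, hS, hSη, rfl⟩ := h
  conv_lhs => rw [← hSη]
  exact (mulVec_injective_of_symplectic hS).eq_iff

lemma of_sympPair_eq_one (h : sympPair μ₁ μ₂ = 1) (hη : sympPair μ₁ η = sympPair μ₂ η) :
    StabilizerRelated η μ₁ μ₂ := by
  refine ⟨sympTransvection (μ₁ + μ₂), sympTransvection_symplectic _, ?_, ?_⟩
  · rw [sympTransvection_mulVec, sympPair_add_right, sympPair_comm η, sympPair_comm η, hη,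
      CharTwo.add_self_eq_zero, zero_smul, add_zero]
  · rw [sympTransvection_mulVec, sympPair_add_right, sympPair_self, h, zero_add, one_smul,
      ← add_assoc, ZModModule.add_self_eq_zero, zero_add]

lemma of_sympPair_eq (hη : η ≠ 0) (h₁ : μ₁ ≠ 0) (h₂ : μ₂ ≠ 0) (h₁η : μ₁ ≠ η) (h₂η : μ₂ ≠ η)
    (h : sympPair μ₁ η = sympPair μ₂ η) : StabilizerRelated η μ₁ μ₂ := by
  obtain rfl | h₁₂ := eq_or_ne μ₁ μ₂
  · exact refl η μ₁
  obtain h₀ | h₁' := (sympPair μ₁ μ₂).two_eq_zero_or_one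
  · obtain ⟨ν, hν₁, hν₂, hνη⟩ :=
      exists_sympPair_eq_one_eq_one_eq_of_sympPair_eq_zero hη h₁ h₂ h₁η h₂η h₀
    exact (of_sympPair_eq_one (by rwa [sympPair_comm]) hνη.symm).trans
      (of_sympPair_eq_one hν₂ (hνη.trans h))
  · exact of_sympPair_eq_one h₁' h

end StabilizerRelated

end

theorem stabilizer_three_orbits_general (g : ℕ)
    (η : Fin g ⊕ Fin g → ZMod 2) (hη : η ≠ 0) :
    (∀ μ₁ μ₂ : Fin g ⊕ Fin g → ZMod 2, μ₁ ≠ 0 → μ₂ ≠ 0 → μ₁ ≠ η → μ₂ ≠ η →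
      sympPair μ₁ η = sympPair μ₂ η →
      ∃ S : Matrix (Fin g ⊕ Fin g) (Fin g ⊕ Fin g) (ZMod 2),
        Sᵀ * sympJ g * S = sympJ g ∧ S.mulVec η = η ∧ S.mulVec μ₁ = μ₂) ∧
    (∀ μ₁ μ₂ : Fin g ⊕ Fin g → ZMod 2, μ₁ ≠ 0 → μ₂ ≠ 0 →
      ((∃ S : Matrix (Fin g ⊕ Fin g) (Fin g ⊕ Fin g) (ZMod 2),
          Sᵀ * sympJ g * S = sympJ g ∧ S.mulVec η = η ∧ S.mulVec μ₁ = μ₂) ↔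
        ((μ₁ = η ∧ μ₂ = η) ∨
         (μ₁ ≠ η ∧ μ₂ ≠ η ∧ sympPair μ₁ η = 0 ∧ sympPair μ₂ η = 0) ∨
         (sympPair μ₁ η = 1 ∧ sympPair μ₂ η = 1)))) := by
  refine ⟨fun μ₁ μ₂ h₁ h₂ h₁η h₂η h => StabilizerRelated.of_sympPair_eq hη h₁ h₂ h₁η h₂η h,
    fun μ₁ μ₂ h₁ h₂ => ⟨fun hrel => ?_, ?_⟩⟩
  · have hpair := StabilizerRelated.sympPair_eq hrel
    have hiff := StabilizerRelated.eq_iff hrel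
    by_cases h₁η : μ₁ = η
    · exact Or.inl ⟨h₁η, hiff.mpr h₁η⟩
    obtain h₀ | h₁' := (sympPair μ₁ η).two_eq_zero_or_one
    · exact Or.inr (Or.inl ⟨h₁η, mt hiff.mp h₁η, h₀, hpair.trans h₀⟩)
    · exact Or.inr (Or.inr ⟨h₁', hpair.trans h₁'⟩)
  · rintro (⟨rfl, rfl⟩ | ⟨h₁η, h₂η, p₁, p₂⟩ | ⟨p₁, p₂⟩)
    · exact StabilizerRelated.refl _ _
    · exact StabilizerRelated.of_sympPair_eq hη h₁ h₂ h₁η h₂η (p₁.trans p₂.symm)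
    · exact StabilizerRelated.of_sympPair_eq hη h₁ h₂ (ne_of_sympPair_eq_one p₁)
        (ne_of_sympPair_eq_one p₂) (p₁.trans p₂.symm)

/-- The stabilizer `G_η` of a nonzero vector `η` in `Sp(2g, ℤ/2ℤ)` acts on the
nonzero vectors of `(ℤ/2ℤ)^{2g}` with exactly three orbits: `{η}`,
`{μ ∉ {0, η} : ⟨μ, η⟩ = 0}` and `{μ : ⟨μ, η⟩ = 1}`. Concretely: any two nonzero
vectors `μ₁, μ₂ ∉ {0, η}` with `⟨μ₁, η⟩ = ⟨μ₂, η⟩` are related by some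
`S ∈ Sp(2g, ℤ/2ℤ)` (i.e. `Sᵀ J S = J`) fixing `η`; and two nonzero vectors are
related by such an `S` if and only if they lie in the same one of the three sets. -/
theorem stabilizer_three_orbits (g : ℕ) (hg : 1 ≤ g)
    (η : Fin g ⊕ Fin g → ZMod 2) (hη : η ≠ 0) :
    (∀ μ₁ μ₂ : Fin g ⊕ Fin g → ZMod 2, μ₁ ≠ 0 → μ₂ ≠ 0 → μ₁ ≠ η → μ₂ ≠ η →
      sympPair μ₁ η = sympPair μ₂ η →
      ∃ S : Matrix (Fin g ⊕ Fin g) (Fin g ⊕ Fin g) (ZMod 2),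
        Sᵀ * sympJ g * S = sympJ g ∧ S.mulVec η = η ∧ S.mulVec μ₁ = μ₂) ∧
    (∀ μ₁ μ₂ : Fin g ⊕ Fin g → ZMod 2, μ₁ ≠ 0 → μ₂ ≠ 0 →
      ((∃ S : Matrix (Fin g ⊕ Fin g) (Fin g ⊕ Fin g) (ZMod 2),
          Sᵀ * sympJ g * S = sympJ g ∧ S.mulVec η = η ∧ S.mulVec μ₁ = μ₂) ↔
        ((μ₁ = η ∧ μ₂ = η) ∨
         (μ₁ ≠ η ∧ μ₂ ≠ η ∧ sympPair μ₁ η = 0 ∧ sympPair μ₂ η = 0) ∨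
         (sympPair μ₁ η = 1 ∧ sympPair μ₂ η = 1)))) :=
  stabilizer_three_orbits_general g η hη
end

section
/- Let k ≥ 1, let τ' be a symmetric k×k complex matrix with positive definite imaginary part, let b ∈ ℂ^k, and for t ∈ ℝ let τ(t) be the symmetric (k+1)×(k+1) complex matrix with (1,1)-entry it, first row/column off-diagonal entries given by b, and lower-right k×k block τ'. Let ε = (1, ε̃) and δ = (y, δ̃) with ε̃, δ̃ ∈ {0,1}^k and y ∈ {0,1}. Then there exist constants T, C > 0 such that for all t ≥ T, |θ[ε;δ](τ(t))| ≤ C·e^{−πt/4}, where θ[ε;δ](τ(t)) = Σ_{n ∈ ℤ^{k+1}} exp(πi((n + ε/2)ᵀ τ(t) (n + ε/2) + (n + ε/2)·δ)). -/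
/-!
With `w = n + ε/2`, the summand has modulus `exp (-π · Im (wᵀ τ(t) w))`, and
`Im (wᵀ τ(t) w) = t w₀² + 2 w₀ ⟨w̃, Im b⟩ + w̃ᵀ (Im τ') w̃`. Because `ε₁ = 1`, `w₀` lies in
`ℤ + 1/2`, so `w₀² ≥ 1/4`. Absorbing the cross term by AM–GM into `w₀²` and the positive
definite block, for `t ≥ A` the exponent is at least `(t - A)/4 + m |w|²`, so every summand is
bounded by `e^{-πt/4}` times a fixed summable Gaussian in `n`.
-/

open scoped Real

/-- The degenerating period matrix `τ(t) = [[it, bᵀ], [b, τ']]`, indexed by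
`Fin 1 ⊕ Fin k`. -/
def degMatrix (k : ℕ) (τ' : Matrix (Fin k) (Fin k) ℂ) (b : Fin k → ℂ) (t : ℝ) :
    Matrix (Fin 1 ⊕ Fin k) (Fin 1 ⊕ Fin k) ℂ :=
  Matrix.fromBlocks (Matrix.of fun _ _ => (t : ℂ) * Complex.I)
    (Matrix.of fun _ j => b j) (Matrix.of fun i _ => b i) τ'

open Finset Matrix

theorem summable_pi_prod_of_nonneg {ι : Type*} [Fintype ι] {κ : ι → Type*} {f : ∀ i, κ i → ℝ}
    (hf0 : ∀ i a, 0 ≤ f i a) (hf : ∀ i, Summable (f i)) :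
    Summable fun x : ∀ i, κ i => ∏ i, f i (x i) := by
  classical
  refine summable_of_sum_le (c := ∏ i, ∑' a, f i a)
    (fun x => prod_nonneg fun i _ => hf0 i (x i)) fun s => ?_
  calc ∑ x ∈ s, ∏ i, f i (x i)
      ≤ ∑ x ∈ Fintype.piFinset fun i => s.image (· i), ∏ i, f i (x i) :=
        sum_le_sum_of_subset_of_nonneg
          (fun x hx => Fintype.mem_piFinset.2 fun i => mem_image_of_mem _ hx)
          fun x _ _ => prod_nonneg fun i _ => hf0 i (x i)
    _ = ∏ i, ∑ a ∈ s.image (· i), f i a := (prod_univ_sum _ _).symm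
    _ ≤ ∏ i, ∑' a, f i a :=
        prod_le_prod (fun i _ => sum_nonneg fun a _ => hf0 i a)
          fun i _ => (hf i).sum_le_tsum _ fun a _ => hf0 i a

theorem summable_exp_neg_mul_sq_add (a : ℝ) {s : ℝ} (hs : 0 < s) :
    Summable fun n : ℤ => Real.exp (-(s * ((n : ℝ) + a) ^ 2)) := by
  refine (HurwitzKernelBounds.summable_f_int 0 a (div_pos hs Real.pi_pos)).congr fun n => ?_
  rw [HurwitzKernelBounds.f_int, pow_zero, one_mul]
  congr 1
  field_simp

theorem summable_exp_neg_mul_sum_sq_add {ι : Type*} [Fintype ι] (a : ι → ℝ) {s : ℝ}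
    (hs : 0 < s) :
    Summable fun n : ι → ℤ => Real.exp (-(s * ∑ i, ((n i : ℝ) + a i) ^ 2)) := by
  simpa only [mul_sum, ← sum_neg_distrib, Real.exp_sum] using
    summable_pi_prod_of_nonneg (fun _ _ => (Real.exp_pos _).le)
      fun i => summable_exp_neg_mul_sq_add (a i) hs

theorem Matrix.PosDef.exists_pos_mul_sum_sq_le {ι : Type*} [Fintype ι] {M : Matrix ι ι ℝ}
    (hM : M.PosDef) : ∃ c, 0 < c ∧ ∀ x : ι → ℝ, c * ∑ i, x i ^ 2 ≤ x ⬝ᵥ M *ᵥ x := by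
  set Q : EuclideanSpace ℝ ι → ℝ := fun v => v.ofLp ⬝ᵥ M *ᵥ v.ofLp
  have hQ : Continuous Q := by fun_prop
  obtain ⟨c, hc, hcQ⟩ := (isCompact_sphere (0 : EuclideanSpace ℝ ι) 1).exists_forall_le'
    hQ.continuousOn (a := 0) fun v hv => by
      refine hM.dotProduct_mulVec_pos (x := v.ofLp) fun h0 => ?_
      simp [(WithLp.ofLp_eq_zero 2).1 h0] at hv
  refine ⟨c, hc, fun x => ?_⟩
  rcases eq_or_ne x 0 with rfl | hx
  · simp
  set v := WithLp.toLp 2 x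
  have hv : ‖v‖ ≠ 0 := by simpa [v] using hx
  have hsq : ∑ i, x i ^ 2 = ‖v‖ ^ 2 := by simp [v, EuclideanSpace.norm_sq_eq]
  have hunit := hcQ (‖v‖⁻¹ • v) (by simp [norm_smul, hv])
  simp only [Q, WithLp.ofLp_smul, mulVec_smul, dotProduct_smul, smul_dotProduct,
    smul_eq_mul] at hunit
  rw [hsq]
  calc c * ‖v‖ ^ 2 ≤ (‖v‖⁻¹ * (‖v‖⁻¹ * (x ⬝ᵥ M *ᵥ x))) * ‖v‖ ^ 2 := by gcongr
    _ = x ⬝ᵥ M *ᵥ x := by field_simp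

theorem neg_le_two_mul_sum_mul {ι : Type*} [Fintype ι] {c : ℝ} (hc : 0 < c) (u : ℝ)
    (v β : ι → ℝ) :
    -(2 / c * (∑ j, β j ^ 2) * u ^ 2 + c / 2 * ∑ j, v j ^ 2) ≤ 2 * u * ∑ j, v j * β j := by
  have hterm : ∀ j, -(2 / c * β j ^ 2 * u ^ 2 + c / 2 * v j ^ 2) ≤ 2 * u * (v j * β j) := by
    intro j
    have hsq : 2 / c * β j ^ 2 * u ^ 2 + c / 2 * v j ^ 2 + 2 * u * (v j * β j) =
        (2 * u * β j + c * v j) ^ 2 / (2 * c) := by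
      field_simp
      ring
    have : 0 ≤ (2 * u * β j + c * v j) ^ 2 / (2 * c) := by positivity
    linarith
  calc _ = ∑ j, -(2 / c * β j ^ 2 * u ^ 2 + c / 2 * v j ^ 2) := by
        simp only [sum_neg_distrib, sum_add_distrib, mul_sum, sum_mul]
    _ ≤ ∑ j, 2 * u * (v j * β j) := sum_le_sum fun j _ => hterm j
    _ = _ := (mul_sum _ _ _).symm

theorem one_div_four_le_sq_intCast_add_half (n : ℤ) : 1 / 4 ≤ ((n : ℝ) + 1 / 2) ^ 2 := by
  have : (0 : ℝ) ≤ n * (n + 1) := by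
    rcases le_or_gt 0 n with h | h
    · exact_mod_cast mul_nonneg h (by omega)
    · exact_mod_cast mul_nonneg_of_nonpos_of_nonpos h.le (by omega)
  nlinarith

noncomputable def thetaTerm {ι : Type*} [Fintype ι] (τ : Matrix ι ι ℂ) (ε δ n : ι → ℤ) : ℂ :=
  Complex.exp ((π : ℂ) * Complex.I *
    ((∑ i, ∑ j, ((n i : ℂ) + (ε i : ℂ) / 2) * τ i j * ((n j : ℂ) + (ε j : ℂ) / 2)) +
      ∑ i, ((n i : ℂ) + (ε i : ℂ) / 2) * (δ i : ℂ)))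

theorem norm_thetaTerm {ι : Type*} [Fintype ι] (τ : Matrix ι ι ℂ) (ε δ n : ι → ℤ) :
    ‖thetaTerm τ ε δ n‖ = Real.exp (-π * ∑ i, ∑ j,
      ((n i : ℝ) + ε i / 2) * ((n j : ℝ) + ε j / 2) * (τ i j).im) := by
  have hcast : ∀ i, (n i : ℂ) + (ε i : ℂ) / 2 = (((n i : ℝ) + ε i / 2 : ℝ) : ℂ) := fun i => by
    push_cast; ring
  simp only [thetaTerm, hcast, Complex.norm_exp, Complex.mul_re, Complex.mul_im, Complex.add_im,
    Complex.add_re, Complex.im_sum, Complex.re_sum, Complex.ofReal_re, Complex.ofReal_im,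
    Complex.I_re, Complex.I_im, Complex.intCast_re, Complex.intCast_im]
  congr 1
  simp only [mul_zero, zero_mul, sub_zero, add_zero, zero_add, sum_const_zero, zero_sub, mul_one,
    neg_mul, mul_sum, ← sum_neg_distrib]
  exact sum_congr rfl fun i _ => sum_congr rfl fun j _ => by ring

theorem sum_mul_mul_im_degMatrix (k : ℕ) (τ' : Matrix (Fin k) (Fin k) ℂ) (b : Fin k → ℂ) (t : ℝ)
    (W : Fin 1 ⊕ Fin k → ℝ) :
    ∑ i, ∑ j, W i * W j * (degMatrix k τ' b t i j).im =
      t * W (Sum.inl 0) ^ 2 + 2 * W (Sum.inl 0) * ∑ j, W (Sum.inr j) * (b j).im +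
        (W ∘ Sum.inr) ⬝ᵥ τ'.map Complex.im *ᵥ (W ∘ Sum.inr) := by
  simp only [Fintype.sum_sum_type, Fin.sum_univ_one, degMatrix, fromBlocks_apply₁₁,
    fromBlocks_apply₁₂, fromBlocks_apply₂₁, fromBlocks_apply₂₂, of_apply, Complex.mul_im,
    Complex.I_im, Complex.I_re, Complex.ofReal_re, Complex.ofReal_im, dotProduct, mulVec,
    map_apply, Function.comp_apply]
  rw [sum_add_distrib]
  simp only [mul_sum, two_mul, add_mul, sum_add_distrib]
  ring_nf
  exact congrArg _ (sum_congr rfl fun i _ => sum_congr rfl fun j _ => by ring)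

theorem exists_le_sum_mul_mul_im_degMatrix {k : ℕ} {τ' : Matrix (Fin k) (Fin k) ℂ}
    (hpos : (τ'.map Complex.im).PosDef) (b : Fin k → ℂ) :
    ∃ A m : ℝ, 0 < A ∧ 0 < m ∧ ∀ t, A ≤ t → ∀ W : Fin 1 ⊕ Fin k → ℝ,
      1 / 4 ≤ W (Sum.inl 0) ^ 2 →
        (t - A) / 4 + m * ∑ i, W i ^ 2 ≤ ∑ i, ∑ j, W i * W j * (degMatrix k τ' b t i j).im := by
  obtain ⟨c, hc, hcQ⟩ := hpos.exists_pos_mul_sum_sq_le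
  set B := ∑ j, (b j).im ^ 2
  have hB : 0 ≤ B := sum_nonneg fun j _ => sq_nonneg _
  refine ⟨2 / c * B + 1, min 1 (c / 2), by positivity, by positivity, fun t ht W hW0 => ?_⟩
  set w₀ := W (Sum.inl 0)
  set S := ∑ j, W (Sum.inr j) ^ 2
  have hcross := neg_le_two_mul_sum_mul hc w₀ (W ∘ Sum.inr) fun j => (b j).im
  have hQ := hcQ (W ∘ Sum.inr)
  have hnorm : ∑ i, W i ^ 2 = w₀ ^ 2 + S := by simp [Fintype.sum_sum_type, w₀, S]
  have hm₁ := min_le_left 1 (c / 2)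
  have hm₂ := min_le_right 1 (c / 2)
  simp only [Function.comp_apply] at hcross hQ
  rw [sum_mul_mul_im_degMatrix, hnorm]
  linarith [mul_nonneg (sub_nonneg.2 ht) (sub_nonneg.2 hW0),
    mul_nonneg (sub_nonneg.2 hm₁) (sq_nonneg w₀),
    mul_nonneg (sub_nonneg.2 hm₂) (sum_nonneg fun j (_ : j ∈ univ) => sq_nonneg (W (Sum.inr j)))]

theorem theta_constant_decay_at_boundary_general (k : ℕ)
    (τ' : Matrix (Fin k) (Fin k) ℂ)
    (hpos : (τ'.map Complex.im).PosDef) (b : Fin k → ℂ)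
    (εt δt : Fin k → ℤ) (y : ℤ) :
    ∃ T C : ℝ, 0 < T ∧ 0 < C ∧ ∀ t : ℝ, T ≤ t →
      ‖(∑' n : Fin 1 ⊕ Fin k → ℤ,
        Complex.exp ((π : ℂ) * Complex.I *
          ((∑ i, ∑ j, ((n i : ℂ) + ((Sum.elim (fun _ => (1 : ℤ)) εt) i : ℂ) / 2) *
              degMatrix k τ' b t i j *
              ((n j : ℂ) + ((Sum.elim (fun _ => (1 : ℤ)) εt) j : ℂ) / 2)) +
            ∑ i, ((n i : ℂ) + ((Sum.elim (fun _ => (1 : ℤ)) εt) i : ℂ) / 2) *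
              ((Sum.elim (fun _ => y) δt) i : ℂ))))‖ ≤
        C * Real.exp (-π * t / 4) := by
  obtain ⟨A, m, hA, hm, hquad⟩ := exists_le_sum_mul_mul_im_degMatrix hpos b
  set ε : Fin 1 ⊕ Fin k → ℤ := Sum.elim (fun _ => 1) εt
  set g : (Fin 1 ⊕ Fin k → ℤ) → ℝ :=
    fun n => Real.exp (-(π * m * ∑ i, ((n i : ℝ) + (ε i : ℝ) / 2) ^ 2))
  have hg : Summable g := summable_exp_neg_mul_sum_sq_add _ (by positivity)
  have hg_pos : 0 < ∑' n, g n := hg.tsum_pos (fun _ => (Real.exp_pos _).le) 0 (Real.exp_pos _)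
  refine ⟨A, Real.exp (π * A / 4) * ∑' n, g n, hA, by positivity, fun t ht => ?_⟩
  have hterm : ∀ n, ‖thetaTerm (degMatrix k τ' b t) ε (Sum.elim (fun _ => y) δt) n‖ ≤
      Real.exp (π * A / 4) * Real.exp (-π * t / 4) * g n := by
    intro n
    have hn₀ : 1 / 4 ≤ ((n (Sum.inl 0) : ℝ) + (ε (Sum.inl 0) : ℝ) / 2) ^ 2 := by
      simpa [ε] using one_div_four_le_sq_intCast_add_half (n (Sum.inl 0))
    have := mul_le_mul_of_nonneg_left (hquad t ht (fun i => (n i : ℝ) + (ε i : ℝ) / 2) hn₀)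
      Real.pi_pos.le
    rw [norm_thetaTerm, ← Real.exp_add, ← Real.exp_add, Real.exp_le_exp]
    linarith
  show ‖∑' n, thetaTerm (degMatrix k τ' b t) ε (Sum.elim (fun _ => y) δt) n‖ ≤ _
  calc _ ≤ ∑' n, Real.exp (π * A / 4) * Real.exp (-π * t / 4) * g n :=
        tsum_of_norm_bounded (hg.mul_left _).hasSum hterm
    _ = _ := by rw [tsum_mul_left]; ring

/-- A theta constant whose characteristic has first entry `ε₁ = 1`
(i.e. `ε = (1, ε̃)`, `δ = (y, δ̃)`), evaluated at the degenerating period matrix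
`τ(t) = [[it, bᵀ], [b, τ']]`, is eventually bounded by `C·e^{-πt/4}`, i.e. has
vanishing order at least `1/8` in `q = e^{2πiτ₁₁}` at the boundary. -/
theorem theta_constant_decay_at_boundary (k : ℕ) (hk : 1 ≤ k)
    (τ' : Matrix (Fin k) (Fin k) ℂ) (hsym : τ'.IsSymm)
    (hpos : (τ'.map Complex.im).PosDef) (b : Fin k → ℂ)
    (εt δt : Fin k → ℤ) (hεt : ∀ i, εt i = 0 ∨ εt i = 1)
    (hδt : ∀ i, δt i = 0 ∨ δt i = 1) (y : ℤ) (hy : y = 0 ∨ y = 1) :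
    ∃ T C : ℝ, 0 < T ∧ 0 < C ∧ ∀ t : ℝ, T ≤ t →
      ‖(∑' n : Fin 1 ⊕ Fin k → ℤ,
        Complex.exp ((π : ℂ) * Complex.I *
          ((∑ i, ∑ j, ((n i : ℂ) + ((Sum.elim (fun _ => (1 : ℤ)) εt) i : ℂ) / 2) *
              degMatrix k τ' b t i j *
              ((n j : ℂ) + ((Sum.elim (fun _ => (1 : ℤ)) εt) j : ℂ) / 2)) +
            ∑ i, ((n i : ℂ) + ((Sum.elim (fun _ => (1 : ℤ)) εt) i : ℂ) / 2) *
              ((Sum.elim (fun _ => y) δt) i : ℂ))))‖ ≤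
        C * Real.exp (-π * t / 4) :=
  theta_constant_decay_at_boundary_general k τ' hpos b εt δt y
end
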